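/- Let P be a finite p-group and T ≤ P with [P:T] = p^c. Then the total number of subgroups of P containing T is at most ∑_{k=0}^{c} binom_p(c,k), the sum of Gaussian binomial coefficients. -/

import Mathlib

open Finset

/-- The Gaussian binomial coefficient `binom_p(m, r) = ∏_{i=0}^{r-1} (p^{m-i}-1)/(p^{i+1}-1)`. -/
noncomputable def gaussBinom (p m r : ℕ) : ℝ :=
  ∏ i ∈ Finset.range r, ((p : ℝ) ^ (m - i) - 1) / ((p : ℝ) ^ (i + 1) - 1)

/-!
Count the subgroups `H ≥ T` of each index `p^k` separately, by induction on `|P|`. Let `N` be a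
normal subgroup of order `p`. If `N ≤ T`, pass to `P/N`. Otherwise `c = c' + 1` and `T ⊔ N` has
index `p^c'`, and a subgroup `H ≥ T` of index `p^(k+1)` either contains `N`, hence `T ⊔ N`, or is
a complement of `N` in `K = H ⊔ N`, a subgroup of index `p^k` containing `T ⊔ N`. Such a
complement is determined by the `N`-components of `c' - k` elements generating `K` over `T ⊔ N`,
so each `K` comes from at most `p^(c'-k)` of them. The resulting bound is the `q`-Pascal
recursion `binom_p(c'+1, k+1) = binom_p(c', k+1) + p^(c'-k) binom_p(c', k)`.
-/

def gaussBinomNat (q : ℕ) : ℕ → ℕ → ℕ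
  | _, 0 => 1
  | 0, _ + 1 => 0
  | c + 1, k + 1 => gaussBinomNat q c (k + 1) + q ^ (c - k) * gaussBinomNat q c k

@[simp]
lemma gaussBinomNat_zero_right (q c : ℕ) : gaussBinomNat q c 0 = 1 := by
  cases c <;> rfl

lemma gaussBinomNat_mul_prod (q c k : ℕ) :
    (gaussBinomNat q c k : ℝ) * ∏ i ∈ range k, ((q : ℝ) ^ (i + 1) - 1) =
      ∏ i ∈ range k, ((q : ℝ) ^ (c - i) - 1) := by
  induction c generalizing k with
  | zero =>
    cases k with
    | zero => simp
    | succ k => simp [gaussBinomNat, prod_range_succ']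
  | succ c ih =>
    cases k with
    | zero => simp
    | succ k =>
      set N := ∏ i ∈ range k, ((q : ℝ) ^ (c - i) - 1)
      set D := ∏ i ∈ range k, ((q : ℝ) ^ (i + 1) - 1)
      have hN : N * ((q : ℝ) ^ (c - k) * (q : ℝ) ^ (k + 1) - (q : ℝ) ^ (c + 1)) = 0 := by
        rcases le_or_gt k c with hkc | hck
        · rw [← pow_add, show c - k + (k + 1) = c + 1 by omega, sub_self, mul_zero]
        · rw [show N = 0 from prod_eq_zero (mem_range.2 hck) (by simp), zero_mul]
      have eD : ∏ i ∈ range (k + 1), ((q : ℝ) ^ (i + 1) - 1) = D * ((q : ℝ) ^ (k + 1) - 1) :=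
        prod_range_succ _ _
      have eN : ∏ i ∈ range (k + 1), ((q : ℝ) ^ (c + 1 - i) - 1) = ((q : ℝ) ^ (c + 1) - 1) * N := by
        simp [prod_range_succ', N, mul_comm]
      have h1 := ih (k + 1)
      rw [eD, prod_range_succ] at h1
      rw [eD, eN]
      simp only [gaussBinomNat, Nat.cast_add, Nat.cast_mul, Nat.cast_pow]
      linear_combination h1 + (q : ℝ) ^ (c - k) * ((q : ℝ) ^ (k + 1) - 1) * ih k + hN

lemma cast_gaussBinomNat {q : ℕ} (hq : q ≠ 1) (c k : ℕ) :
    (gaussBinomNat q c k : ℝ) = gaussBinom q c k := by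
  have hD : ∏ i ∈ range k, ((q : ℝ) ^ (i + 1) - 1) ≠ 0 :=
    prod_ne_zero_iff.2 fun i _ ↦ sub_ne_zero.2 <| by
      rw [Ne, pow_eq_one_iff_of_nonneg q.cast_nonneg i.succ_ne_zero]
      exact_mod_cast hq
  rw [gaussBinom, prod_div_distrib, eq_div_iff hD, gaussBinomNat_mul_prod]

theorem Set.ncard_le_mul_ncard_of_mapsTo {α β : Type*} {s : Set α} {t : Set β} {f : α → β}
    (hf : Set.MapsTo f s t) (n : ℕ) (hn : ∀ b ∈ t, {a ∈ s | f a = b}.ncard ≤ n)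
    (hs : s.Finite := by toFinite_tac) (ht : t.Finite := by toFinite_tac) :
    s.ncard ≤ n * t.ncard := by
  classical
  lift s to Finset α using hs
  lift t to Finset β using ht
  simp only [Set.ncard_coe_finset] at hn ⊢
  refine Finset.card_le_mul_card_image_of_maps_to hf n fun b hb ↦ ?_
  simpa [← Finset.coe_filter] using hn b hb

theorem IsPGroup.exists_normal_card_eq {p : ℕ} [Fact p.Prime] {G : Type*} [Group G] [Finite G]
    [Nontrivial G] (hG : IsPGroup p G) : ∃ N : Subgroup G, N.Normal ∧ Nat.card N = p := by
  obtain ⟨m, hm⟩ := IsPGroup.iff_card.mp (hG.to_subgroup (Subgroup.center G))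
  have hm0 : m ≠ 0 := by
    rintro rfl
    have := Finite.one_lt_card_iff_nontrivial.mpr hG.center_nontrivial
    simp [hm] at this
  obtain ⟨z, hz⟩ := exists_prime_orderOf_dvd_card' p (hm ▸ dvd_pow_self p hm0)
  have hle : Subgroup.zpowers (z : G) ≤ Subgroup.center G := Subgroup.zpowers_le.mpr z.2
  refine ⟨Subgroup.zpowers (z : G), ⟨fun n hn x ↦ ?_⟩, ?_⟩
  · rwa [Subgroup.mem_center_iff.mp (hle hn) x, mul_inv_cancel_right]
  · rw [Nat.card_zpowers, Subgroup.orderOf_coe, hz]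

namespace Subgroup

open Pointwise

variable {G : Type*} [Group G]

def overgroupsOfIndex (T : Subgroup G) (n : ℕ) : Set (Subgroup G) :=
  {H | T ≤ H ∧ H.index = n}

theorem ncard_overgroupsOfIndex_one_le (T : Subgroup G) : (T.overgroupsOfIndex 1).ncard ≤ 1 :=
  calc (T.overgroupsOfIndex 1).ncard ≤ ({⊤} : Set (Subgroup G)).ncard :=
        Set.ncard_le_ncard fun _ hH ↦ index_eq_one.mp hH.2
    _ = 1 := Set.ncard_singleton _

variable {p : ℕ}

theorem exists_sup_closure_eq (hp : p.Prime) (r : ℕ) {U K : Subgroup G} (hUK : U ≤ K)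
    (hr : U.relIndex K ∣ p ^ r) :
    ∃ x : Fin r → G, (∀ i, x i ∈ K) ∧ U ⊔ closure (Set.range x) = K := by
  induction r generalizing U with
  | zero =>
    refine ⟨Fin.elim0, fun i ↦ i.elim0, ?_⟩
    simpa [le_antisymm_iff, hUK] using relIndex_eq_one.mp (Nat.dvd_one.mp hr)
  | succ r ih =>
    by_cases hKU : K ≤ U
    · exact ⟨fun _ ↦ 1, fun _ ↦ K.one_mem, by simpa using le_antisymm hUK hKU⟩
    obtain ⟨y, hyK, hyU⟩ := Set.not_subset.mp hKU
    have hU'K : U ⊔ zpowers y ≤ K := sup_le hUK (zpowers_le.mpr hyK)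
    have hmul := relIndex_mul_relIndex U (U ⊔ zpowers y) K le_sup_left hU'K
    have hp_dvd : p ∣ U.relIndex (U ⊔ zpowers y) := by
      obtain ⟨a, -, ha⟩ := (Nat.dvd_prime_pow hp).mp (hmul ▸ Dvd.intro _ rfl |>.trans hr)
      have ha0 : a ≠ 0 := by
        rintro rfl
        exact hyU (relIndex_eq_one.mp ha (mem_sup_right (mem_zpowers y)))
      exact ha ▸ dvd_pow_self p ha0
    obtain ⟨x, hxK, hx⟩ := ih hU'K <| Nat.dvd_of_mul_dvd_mul_left hp.pos <| by
      rw [← pow_succ']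
      exact (mul_dvd_mul_right hp_dvd _).trans (hmul ▸ hr)
    refine ⟨Fin.cons y x, Fin.cases hyK hxK, ?_⟩
    rwa [Fin.range_cons, Set.insert_eq, closure_union, ← zpowers_eq_closure, ← sup_assoc]

variable [Finite G]

attribute [local instance] isFiniteRelIndex_of_finiteIndex

theorem inf_eq_bot_or_le_of_card_prime (hp : p.Prime) (H : Subgroup G) {N : Subgroup G}
    (hN : Nat.card N = p) : H ⊓ N = ⊥ ∨ N ≤ H := by
  have hdvd : Nat.card (H ⊓ N : Subgroup G) ∣ p := hN ▸ card_dvd_of_le inf_le_right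
  refine (hp.eq_one_or_self_of_dvd _ hdvd).imp card_eq_one.mp fun h ↦ ?_
  exact inf_eq_right.mp (eq_of_le_of_card_ge inf_le_right (hN.trans h.symm).le)

theorem relIndex_sup_of_normal (H N : Subgroup G) [N.Normal] :
    H.relIndex (H ⊔ N) = H.relIndex N := by
  have h := relIndex_mul_relIndex (H ⊓ N) H (H ⊔ N) inf_le_left le_sup_left
  rw [← relIndex_mul_relIndex (H ⊓ N) N (H ⊔ N) inf_le_right le_sup_right, inf_relIndex_left,
    relIndex_sup_right, inf_relIndex_right] at h
  exact Nat.eq_of_mul_eq_mul_left (Nat.pos_of_ne_zero relIndex_ne_zero) (h.trans (mul_comm _ _))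

theorem relIndex_sup_eq_card {H N : Subgroup G} [N.Normal] (h : H ⊓ N = ⊥) :
    H.relIndex (H ⊔ N) = Nat.card N := by
  rw [relIndex_sup_of_normal, ← inf_relIndex_right, h, relIndex_bot_left]

theorem index_eq_card_mul_index_sup {H N : Subgroup G} [N.Normal] (h : H ⊓ N = ⊥) :
    H.index = Nat.card N * (H ⊔ N).index := by
  rw [← relIndex_sup_eq_card h, relIndex_mul_index le_sup_left]

theorem eq_of_le_of_sup_eq_of_inf_eq_bot {M H N : Subgroup G} [N.Normal] (hMH : M ≤ H)
    (hsup : M ⊔ N = H ⊔ N) (hHN : H ⊓ N = ⊥) : M = H := by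
  have h1 : M.relIndex H * Nat.card N = M.relIndex N := by
    rw [← relIndex_sup_eq_card hHN, relIndex_mul_relIndex M H _ hMH le_sup_left, ← hsup,
      relIndex_sup_of_normal]
  have h2 : M.relIndex N ≤ Nat.card N :=
    relIndex_bot_left N ▸ relIndex_le_of_le_left bot_le relIndex_ne_zero
  have h3 : M.relIndex H ≤ 1 := Nat.le_of_mul_le_mul_right (by omega) (Nat.card_pos (α := N))
  exact le_antisymm hMH <| relIndex_eq_one.mp <|
    le_antisymm h3 <| Nat.pos_of_ne_zero relIndex_ne_zero

theorem ncard_complements_le_card_pow (hp : p.Prime) {N T K : Subgroup G} [N.Normal]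
    (hTK : T ⊔ N ≤ K) {r : ℕ} (hr : (T ⊔ N).relIndex K ∣ p ^ r) :
    {H : Subgroup G | T ≤ H ∧ H ⊓ N = ⊥ ∧ H ⊔ N = K}.ncard ≤ Nat.card N ^ r := by
  set S := {H : Subgroup G | T ≤ H ∧ H ⊓ N = ⊥ ∧ H ⊔ N = K}
  obtain ⟨x, hxK, hx⟩ := exists_sup_closure_eq hp r hTK hr
  have hdecomp : ∀ H ∈ S, ∀ i, ∃ n ∈ N, x i * n⁻¹ ∈ H := by
    rintro H ⟨-, -, hHN⟩ i
    obtain ⟨h, hh, n, hn, hx⟩ : x i ∈ (H : Set G) * (N : Set G) := by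
      rw [← mul_normal, hHN]
      exact hxK i
    exact ⟨n, hn, by rwa [← hx, mul_inv_cancel_right]⟩
  choose! n hnN hnH using hdecomp
  -- `H` is recovered from the `N`-components of the generators `x i`.
  have hH : ∀ H ∈ S, H = T ⊔ closure (Set.range fun i ↦ x i * (n H i)⁻¹) := by
    intro H hS
    have hle : T ⊔ closure (Set.range fun i ↦ x i * (n H i)⁻¹) ≤ H :=
      sup_le hS.1 ((closure_le H).mpr (Set.range_subset_iff.mpr (hnH H hS)))
    refine (eq_of_le_of_sup_eq_of_inf_eq_bot hle
      (le_antisymm (sup_le_sup_right hle N) ?_) hS.2.1).symm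
    rw [hS.2.2, ← hx]
    refine sup_le (sup_le_sup_right le_sup_left N) ((closure_le _).mpr ?_)
    rintro _ ⟨i, rfl⟩
    have := mul_mem (mem_sup_left (mem_sup_right (subset_closure (Set.mem_range_self i))))
      (mem_sup_right (hnN H hS i) : n H i ∈ T ⊔ closure (Set.range fun i ↦ x i * (n H i)⁻¹) ⊔ N)
    rwa [inv_mul_cancel_right] at this
  calc S.ncard ≤ (Set.univ.pi fun _ : Fin r ↦ (N : Set G)).ncard :=
        Set.ncard_le_ncard_of_injOn n (fun H hS i _ ↦ hnN H hS i)
          (fun H₁ h₁ H₂ h₂ e ↦ by rw [hH H₁ h₁, hH H₂ h₂, e]) (Set.toFinite _)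
    _ = Nat.card N ^ r := by
        rw [← Nat.card_coe_set_eq, Nat.card_congr (Equiv.Set.univPi _), Nat.card_pi]
        simp

theorem ncard_overgroupsOfIndex_le_quotient {N T : Subgroup G} [N.Normal] (hNT : N ≤ T)
    (n : ℕ) :
    (T.overgroupsOfIndex n).ncard ≤ ((T.map (QuotientGroup.mk' N)).overgroupsOfIndex n).ncard := by
  have hker {H : Subgroup G} (hTH : T ≤ H) : (QuotientGroup.mk' N).ker ≤ H := by
    rw [QuotientGroup.ker_mk']
    exact hNT.trans hTH
  refine Set.ncard_le_ncard_of_injOn (map (QuotientGroup.mk' N)) (fun H hH ↦ ⟨map_mono hH.1, ?_⟩)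
    (fun H₁ h₁ H₂ h₂ ↦ map_injective_of_ker_le _ (hker h₁.1) (hker h₂.1)) (Set.toFinite _)
  rw [index_map_eq _ (QuotientGroup.mk'_surjective N) (hker hH.1), hH.2]

theorem ncard_overgroupsOfIndex_inf_eq_bot_le (hp : p.Prime) {N T : Subgroup G} [N.Normal]
    (hN : Nat.card N = p) {c : ℕ} (hT : (T ⊔ N).index = p ^ c) (k : ℕ) :
    {H ∈ T.overgroupsOfIndex (p ^ (k + 1)) | H ⊓ N = ⊥}.ncard ≤
      p ^ (c - k) * ((T ⊔ N).overgroupsOfIndex (p ^ k)).ncard := by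
  refine Set.ncard_le_mul_ncard_of_mapsTo (f := (· ⊔ N)) ?_ _ fun K ⟨hTK, hK⟩ ↦ ?_
  · rintro H ⟨⟨hTH, hH⟩, hHN⟩
    refine ⟨sup_le_sup_right hTH N, Nat.eq_of_mul_eq_mul_left hp.pos ?_⟩
    rw [← hN, ← index_eq_card_mul_index_sup hHN, hH, hN, pow_succ']
  have hrel : (T ⊔ N).relIndex K * p ^ k = p ^ c := by
    rw [← hK, relIndex_mul_index hTK, hT]
  obtain ⟨j, -, hj⟩ := (Nat.dvd_prime_pow hp).mp (Dvd.intro _ hrel)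
  rw [hj, ← pow_add] at hrel
  have hjc : c - k = j := by have := Nat.pow_right_injective hp.two_le hrel; omega
  calc {H ∈ {H ∈ T.overgroupsOfIndex (p ^ (k + 1)) | H ⊓ N = ⊥} | H ⊔ N = K}.ncard
      ≤ {H : Subgroup G | T ≤ H ∧ H ⊓ N = ⊥ ∧ H ⊔ N = K}.ncard :=
        Set.ncard_le_ncard fun H ⟨⟨⟨hTH, _⟩, hHN⟩, hHK⟩ ↦ ⟨hTH, hHN, hHK⟩
    _ ≤ p ^ (c - k) := hN ▸ hjc ▸ ncard_complements_le_card_pow hp hTK (hj ▸ dvd_rfl)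

theorem ncard_overgroupsOfIndex_succ_le (hp : p.Prime) {N T : Subgroup G} [N.Normal]
    (hN : Nat.card N = p) {c : ℕ} (hT : (T ⊔ N).index = p ^ c) (k : ℕ) :
    (T.overgroupsOfIndex (p ^ (k + 1))).ncard ≤
      ((T ⊔ N).overgroupsOfIndex (p ^ (k + 1))).ncard +
        p ^ (c - k) * ((T ⊔ N).overgroupsOfIndex (p ^ k)).ncard := by
  set S := T.overgroupsOfIndex (p ^ (k + 1))
  calc S.ncard ≤ ({H ∈ S | N ≤ H} ∪ {H ∈ S | H ⊓ N = ⊥}).ncard :=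
        Set.ncard_le_ncard fun H hH ↦
          (inf_eq_bot_or_le_of_card_prime hp H hN).symm.imp (And.intro hH) (And.intro hH)
    _ ≤ {H ∈ S | N ≤ H}.ncard + {H ∈ S | H ⊓ N = ⊥}.ncard := Set.ncard_union_le _ _
    _ ≤ _ := by
        refine add_le_add (Set.ncard_le_ncard ?_)
          (ncard_overgroupsOfIndex_inf_eq_bot_le hp hN hT k)
        exact fun H ⟨⟨hTH, hH⟩, hNH⟩ ↦ ⟨sup_le hTH hNH, hH⟩

end Subgroup

open Subgroup in
theorem IsPGroup.ncard_overgroupsOfIndex_le {p : ℕ} (hp : p.Prime) {G : Type*} [Group G]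
    [Finite G] (hG : IsPGroup p G) {T : Subgroup G} {c : ℕ} (hT : T.index = p ^ c) (k : ℕ) :
    (T.overgroupsOfIndex (p ^ k)).ncard ≤ gaussBinomNat p c k := by
  induction hcard : Nat.card G using Nat.strong_induction_on generalizing G T c k with
  | _ n ih =>
  cases k with
  | zero => simpa using T.ncard_overgroupsOfIndex_one_le
  | succ k =>
  rcases subsingleton_or_nontrivial G with hG1 | hG1
  · have hempty : T.overgroupsOfIndex (p ^ (k + 1)) = ∅ := by
      refine Set.eq_empty_of_forall_notMem fun H hH ↦ ?_
      have := hH.2 ▸ H.index_dvd_card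
      rw [Nat.card_of_subsingleton (1 : G), Nat.dvd_one] at this
      exact (Nat.one_lt_pow k.succ_ne_zero hp.one_lt).ne' this
    simp [hempty]
  have : Fact p.Prime := ⟨hp⟩
  obtain ⟨N, hNn, hN⟩ := hG.exists_normal_card_eq
  have hlt : Nat.card (G ⧸ N) < n := by
    rw [← hcard, ← N.card_mul_index, hN, index_eq_card]
    exact lt_mul_left Nat.card_pos hp.one_lt
  have ih_quot {T' : Subgroup G} {c' : ℕ} (hNT' : N ≤ T') (hT' : T'.index = p ^ c') (k' : ℕ) :
      (T'.overgroupsOfIndex (p ^ k')).ncard ≤ gaussBinomNat p c' k' := by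
    refine (ncard_overgroupsOfIndex_le_quotient hNT' _).trans
      (ih _ hlt (hG.to_quotient N) ?_ k' rfl)
    rwa [index_map_eq _ (QuotientGroup.mk'_surjective N) (by rwa [QuotientGroup.ker_mk'])]
  rcases inf_eq_bot_or_le_of_card_prime hp T hN with hTN | hNT
  · have h := index_eq_card_mul_index_sup hTN
    rw [hT, hN] at h
    obtain ⟨c', hc'⟩ := (Nat.dvd_prime_pow hp).mp (Dvd.intro_left _ h.symm)
    obtain rfl : c = c' + 1 := Nat.pow_right_injective hp.two_le <|
      show p ^ c = p ^ (c' + 1) by rw [h, hc'.2, pow_succ']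
    calc (T.overgroupsOfIndex (p ^ (k + 1))).ncard
        ≤ _ := ncard_overgroupsOfIndex_succ_le hp hN hc'.2 k
      _ ≤ gaussBinomNat p c' (k + 1) + p ^ (c' - k) * gaussBinomNat p c' k :=
        add_le_add (ih_quot le_sup_right hc'.2 _)
          (Nat.mul_le_mul_left _ (ih_quot le_sup_right hc'.2 _))
      _ = gaussBinomNat p (c' + 1) (k + 1) := rfl
  · exact ih_quot hNT hT _

/-- In a finite `p`-group `P` with `T ≤ P` of index `p^c`, the number of subgroups of `P`
containing `T` is at most `∑_{k=0}^{c} binom_p(c, k)`. -/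
theorem card_sub_le_sum_gaussBinom (p : ℕ) (hp : p.Prime) (P : Type*) [Group P] [Finite P]
    (hP : IsPGroup p P) (T : Subgroup P) (c : ℕ) (hT : T.index = p ^ c) :
    ({H : Subgroup P | T ≤ H}.ncard : ℝ) ≤ ∑ k ∈ Finset.range (c + 1), gaussBinom p c k := by
  have hsub : {H : Subgroup P | T ≤ H} ⊆ ⋃ k ∈ range (c + 1), T.overgroupsOfIndex (p ^ k) := by
    intro H hTH
    obtain ⟨k, hk, hH⟩ := (Nat.dvd_prime_pow hp).mp (hT ▸ Subgroup.index_dvd_of_le hTH)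
    exact Set.mem_biUnion (mem_range.mpr (Nat.lt_succ_of_le hk)) ⟨hTH, hH⟩
  calc ({H : Subgroup P | T ≤ H}.ncard : ℝ)
      ≤ ∑ k ∈ range (c + 1), ((T.overgroupsOfIndex (p ^ k)).ncard : ℝ) := by
        exact_mod_cast (Set.ncard_le_ncard hsub).trans (Finset.set_ncard_biUnion_le _ _)
    _ ≤ ∑ k ∈ range (c + 1), gaussBinom p c k := sum_le_sum fun k _ ↦ by
        rw [← cast_gaussBinomNat hp.one_lt.ne']
        exact_mod_cast hP.ncard_overgroupsOfIndex_le hp hT k
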